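/- arXiv:2008.11627 — 3 statements merged into one kernel-verified Lean document; each statement's English description precedes it below -/
import Mathlib

section
/- For all l with 1 < l < 2 there exists a constant C_l > 0 such that for all a, b ∈ ℝ^N with |a| + |b| > 0, |a−b|^l ≤ C_l · ((|a|^{l−2}a − |b|^{l−2}b)·(a−b))^{l/2} · (|a|^l + |b|^l)^{(2−l)/2}. -/
open scoped NNReal

/-! With `s = ‖a‖`, `t = ‖b‖`, `c = ⟪a, b⟫`, both `‖a - b‖²` and
`⟪‖a‖^(l-2) a - ‖b‖^(l-2) b, a - b⟫` are affine in `c ∈ [-st, st]`, so the pointwise bound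
`(l - 1) (s + t)^(l-2) ‖a - b‖² ≤ ⟪‖a‖^(l-2) a - ‖b‖^(l-2) b, a - b⟫` only has to be checked for
`c = ±st`. For `c = st` it is the tangent-line bound of the concave map `x ↦ x^(l-1)`, for
`c = -st` its subadditivity. Raising the bound to the power `l/2` and using
`(s + t)^l ≤ 2^(l-1) (s^l + t^l)` gives the theorem. -/

namespace Real
variable {p s t c : ℝ}

lemma mul_rpow_sub_one_mul_sub_le_rpow_sub_rpow (hp0 : 0 ≤ p) (hp1 : p ≤ 1) (ht : 0 ≤ t)
    (hs : 0 < s) : p * s ^ (p - 1) * (s - t) ≤ s ^ p - t ^ p := by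
  have hbern := rpow_one_add_le_one_add_mul_self (s := t / s - 1)
    (by linarith [div_nonneg ht hs.le]) hp0 hp1
  rw [add_sub_cancel, div_rpow ht hs.le, div_le_iff₀ (rpow_pos_of_pos hs p)] at hbern
  rw [rpow_sub_one hs.ne']
  have hfactor : s ^ p / s * (s - t) = s ^ p * (1 - t / s) := by field_simp
  nlinarith [hfactor]

lemma mul_add_rpow_sub_one_mul_sq_le (hp0 : 0 ≤ p) (hp1 : p ≤ 1) (hs : 0 ≤ s) (ht : 0 ≤ t) :
    p * (s + t) ^ (p - 1) * (s - t) ^ 2 ≤ (s - t) * (s ^ p - t ^ p) := by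
  wlog hts : t ≤ s generalizing s t
  · have := this ht hs (le_of_not_ge hts)
    rw [add_comm] at this
    nlinarith [this]
  rcases hts.eq_or_lt with rfl | hlt
  · simp
  have hs0 : 0 < s := ht.trans_lt hlt
  have hmono : (s + t) ^ (p - 1) ≤ s ^ (p - 1) :=
    rpow_le_rpow_of_nonpos hs0 (by linarith) (by linarith)
  have htan := mul_rpow_sub_one_mul_sub_le_rpow_sub_rpow hp0 hp1 ht hs0
  have hst : 0 ≤ s - t := by linarith
  calc p * (s + t) ^ (p - 1) * (s - t) ^ 2
      ≤ p * s ^ (p - 1) * (s - t) * (s - t) := by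
        rw [sq, ← mul_assoc]; gcongr
    _ ≤ (s - t) * (s ^ p - t ^ p) := by nlinarith

lemma affine_nonneg_of_abs_le {A B m : ℝ} (hpos : 0 ≤ A + B * m) (hneg : 0 ≤ A - B * m)
    (hc : |c| ≤ m) : 0 ≤ A + B * c := by
  obtain ⟨h₁, h₂⟩ := abs_le.mp hc
  rcases le_total 0 B with hB | hB <;> nlinarith

lemma rpow_sub_one_mul_self (hp : p ≠ 0) (hs : 0 ≤ s) : s ^ (p - 1) * s = s ^ p := by
  rw [← rpow_add_one' hs (by simpa using hp), sub_add_cancel]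

lemma mul_add_rpow_sub_one_mul_le (hp0 : 0 < p) (hp1 : p ≤ 1) (hs : 0 ≤ s) (ht : 0 ≤ t)
    (hc : |c| ≤ s * t) :
    p * (s + t) ^ (p - 1) * (s ^ 2 + t ^ 2 - 2 * c) ≤
      s ^ (p - 1) * (s ^ 2 - c) + t ^ (p - 1) * (t ^ 2 - c) := by
  have hs' := rpow_sub_one_mul_self hp0.ne' hs
  have ht' := rpow_sub_one_mul_self hp0.ne' ht
  have hst' := rpow_sub_one_mul_self hp0.ne' (add_nonneg hs ht)
  set A := s ^ (p - 1) * s ^ 2 + t ^ (p - 1) * t ^ 2 - p * (s + t) ^ (p - 1) * (s ^ 2 + t ^ 2)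
  set B := 2 * p * (s + t) ^ (p - 1) - s ^ (p - 1) - t ^ (p - 1)
  have hparallel : 0 ≤ A + B * (s * t) := by
    have h := mul_add_rpow_sub_one_mul_sq_le hp0.le hp1 hs ht
    have e : A + B * (s * t) = (s - t) * (s ^ p - t ^ p) - p * (s + t) ^ (p - 1) * (s - t) ^ 2 := by
      rw [← hs', ← ht']; ring
    linarith
  have hantiparallel : 0 ≤ A - B * (s * t) := by
    have h : p * (s + t) ^ p ≤ s ^ p + t ^ p :=
      calc p * (s + t) ^ p ≤ (s + t) ^ p := mul_le_of_le_one_left (by positivity) hp1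
        _ ≤ s ^ p + t ^ p := rpow_add_le_add_rpow hs ht hp0.le hp1
    have e : A - B * (s * t) = (s + t) * (s ^ p + t ^ p - p * (s + t) ^ p) := by
      rw [← hs', ← ht', ← hst']; ring
    rw [e]
    exact mul_nonneg (add_nonneg hs ht) (by linarith)
  linarith [affine_nonneg_of_abs_le hparallel hantiparallel hc]

lemma rpow_add_le_mul_rpow_add_rpow (hs : 0 ≤ s) (ht : 0 ≤ t) (hp : 1 ≤ p) :
    (s + t) ^ p ≤ 2 ^ (p - 1) * (s ^ p + t ^ p) := by
  lift s to ℝ≥0 using hs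
  lift t to ℝ≥0 using ht
  exact_mod_cast NNReal.rpow_add_le_mul_rpow_add_rpow s t hp

lemma rpow_le_of_mul_rpow_mul_sq_le {l k x d S M : ℝ} (hl0 : 0 ≤ l) (hl2 : l ≤ 2) (hk : 0 < k)
    (hc : 0 < c) (hx : 0 ≤ x) (hS : 0 < S) (hkey : k * S ^ (l - 2) * x ^ 2 ≤ d)
    (hSM : S ^ l ≤ c * M) :
    x ^ l ≤ k ^ (-(l / 2)) * c ^ ((2 - l) / 2) * d ^ (l / 2) * M ^ ((2 - l) / 2) := by
  have hM : 0 ≤ M := (pos_of_mul_pos_right ((rpow_pos_of_pos hS l).trans_le hSM) hc.le).le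
  have hd : 0 ≤ d := le_trans (by positivity) hkey
  have hx2 : x ^ 2 ≤ k⁻¹ * S ^ (2 - l) * d := by
    rw [← neg_sub, rpow_neg hS.le, ← mul_inv, ← div_eq_inv_mul, le_div_iff₀' (by positivity)]
    exact hkey
  calc x ^ l = (x ^ 2) ^ (l / 2) := by rw [← rpow_natCast_mul hx]; ring_nf
    _ ≤ (k⁻¹ * S ^ (2 - l) * d) ^ (l / 2) := rpow_le_rpow (by positivity) hx2 (by linarith)
    _ = k ^ (-(l / 2)) * (S ^ l) ^ ((2 - l) / 2) * d ^ (l / 2) := by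
      rw [mul_rpow (by positivity) hd, mul_rpow (by positivity) (by positivity),
        inv_rpow hk.le, ← rpow_neg hk.le, ← rpow_mul hS.le, ← rpow_mul hS.le]
      ring_nf
    _ ≤ k ^ (-(l / 2)) * (c * M) ^ ((2 - l) / 2) * d ^ (l / 2) := by gcongr
    _ = k ^ (-(l / 2)) * c ^ ((2 - l) / 2) * d ^ (l / 2) * M ^ ((2 - l) / 2) := by
      rw [mul_rpow hc.le hM]
      ring

end Real

lemma mul_rpow_mul_norm_sub_sq_le_inner {E : Type*} [NormedAddCommGroup E]
    [InnerProductSpace ℝ E] {l : ℝ} (hl1 : 1 < l) (hl2 : l ≤ 2) (a b : E) :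
    (l - 1) * (‖a‖ + ‖b‖) ^ (l - 2) * ‖a - b‖ ^ 2 ≤
      inner ℝ (‖a‖ ^ (l - 2) • a - ‖b‖ ^ (l - 2) • b) (a - b) := by
  have h := Real.mul_add_rpow_sub_one_mul_le (p := l - 1) (by linarith) (by linarith)
    (norm_nonneg a) (norm_nonneg b) (abs_real_inner_le_norm a b)
  rw [sub_sub, one_add_one_eq_two] at h
  have hinner : inner ℝ (‖a‖ ^ (l - 2) • a - ‖b‖ ^ (l - 2) • b) (a - b) =
      ‖a‖ ^ (l - 2) * (‖a‖ ^ 2 - inner ℝ a b) + ‖b‖ ^ (l - 2) * (‖b‖ ^ 2 - inner ℝ a b) := by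
    simp only [inner_sub_left, inner_sub_right, real_inner_smul_left, real_inner_self_eq_norm_sq,
      real_inner_comm a b]
    ring
  rw [hinner, norm_sub_sq_real]
  linarith

theorem stmt_5_general (N : ℕ) (l : ℝ) (hl1 : 1 < l) (hl2 : l < 2) :
    ∃ C : ℝ, 0 < C ∧ ∀ a b : EuclideanSpace ℝ (Fin N), 0 < ‖a‖ + ‖b‖ →
      ‖a - b‖ ^ l ≤ C *
        ((inner ℝ (‖a‖ ^ (l - 2) • a - ‖b‖ ^ (l - 2) • b) (a - b) : ℝ)) ^ (l / 2) *
        (‖a‖ ^ l + ‖b‖ ^ l) ^ ((2 - l) / 2) := by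
  refine ⟨(l - 1) ^ (-(l / 2)) * (2 ^ (l - 1)) ^ ((2 - l) / 2), by positivity, fun a b hab => ?_⟩
  exact Real.rpow_le_of_mul_rpow_mul_sq_le (by linarith) hl2.le (by linarith) (by positivity)
    (norm_nonneg _) hab (mul_rpow_mul_norm_sub_sq_le_inner hl1 hl2.le a b)
    (Real.rpow_add_le_mul_rpow_add_rpow (norm_nonneg a) (norm_nonneg b) hl1.le)

theorem stmt_5 (N : ℕ) (hN : 0 < N) (l : ℝ) (hl1 : 1 < l) (hl2 : l < 2) :
    ∃ C : ℝ, 0 < C ∧ ∀ a b : EuclideanSpace ℝ (Fin N), 0 < ‖a‖ + ‖b‖ →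
      ‖a - b‖ ^ l ≤ C *
        ((inner ℝ (‖a‖ ^ (l - 2) • a - ‖b‖ ^ (l - 2) • b) (a - b) : ℝ)) ^ (l / 2) *
        (‖a‖ ^ l + ‖b‖ ^ l) ^ ((2 - l) / 2) :=
  stmt_5_general N l hl1 hl2
end

section
/- Let σ > 1 and let M : [t₀, T) → ℝ be twice continuously differentiable with M(t₀) > 0, M'(t₀) > 0, and M''(t)·M(t) ≥ σ·M'(t)² for all t ∈ [t₀, T). Then T ≤ t₀ + M(t₀)/((σ−1)·M'(t₀)); equivalently, if T > t₀ + M(t₀)/((σ−1)M'(t₀)) then M(t) → ∞ as t approaches t₀ + M(t₀)/((σ−1)M'(t₀)) from below. -/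
/-!
Where `M > 0`, the inequality forces `M'' ≥ 0`, so `M'` stays above `M' t₀ > 0` and `M` stays
above `M t₀`; a first-zero argument then makes `M` positive on all of `[t₀, T)`. On that interval
`M' M^{-σ}` is nondecreasing, since its derivative is `M^{-σ-1} (M'' M - σ M'²) ≥ 0`. This is the
derivative of `M^{1-σ} / (1 - σ)`, so the positive function `M^{1-σ}` lies below its tangent line
at `t₀`, which has slope `(1 - σ) M' t₀ M t₀^{-σ} < 0` and vanishes at
`t₀ + M t₀ / ((σ - 1) M' t₀)`.
-/

open Set

theorem pos_of_forall_Ico_pos_imp_pos {f : ℝ → ℝ} {a b : ℝ} (hf : ContinuousOn f (Icc a b))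
    (ha : 0 < f a) (hstep : ∀ u ∈ Ioc a b, (∀ s ∈ Ico a u, 0 < f s) → 0 < f u) :
    ∀ t ∈ Icc a b, 0 < f t := by
  by_contra! ⟨t, ht, hft⟩
  set S := {s ∈ Icc a b | f s ≤ 0}
  have hS : IsClosed S := hf.preimage_isClosed_of_isClosed isClosed_Icc isClosed_Iic
  have hbdd : BddBelow S := ⟨a, fun s hs => hs.1.1⟩
  obtain ⟨⟨hau, hub⟩, hfu⟩ : sInf S ∈ S := hS.csInf_mem ⟨t, ht, hft⟩ hbdd
  have hau' : a < sInf S := hau.lt_of_ne fun h => (h ▸ hfu).not_gt ha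
  refine (hstep _ ⟨hau', hub⟩ fun s hs => ?_).not_ge hfu
  by_contra! hfs
  exact (csInf_le hbdd ⟨⟨hs.1, hs.2.le.trans hub⟩, hfs⟩).not_gt hs.2

section Calculus

variable {f f' : ℝ → ℝ} {a b : ℝ}

theorem monotoneOn_Icc_of_hasDerivAt_nonneg (hf : ∀ x ∈ Icc a b, HasDerivAt f (f' x) x)
    (hf' : ∀ x ∈ Ioo a b, 0 ≤ f' x) : MonotoneOn f (Icc a b) :=
  monotoneOn_of_hasDerivWithinAt_nonneg (convex_Icc a b)
    (fun x hx => (hf x hx).continuousAt.continuousWithinAt)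
    (fun x hx => (hf x (interior_subset hx)).hasDerivWithinAt)
    (by simpa only [interior_Icc] using hf')

theorem mul_sub_le_sub_of_monotoneOn_deriv (hab : a ≤ b)
    (hf : ∀ x ∈ Icc a b, HasDerivAt f (f' x) x) (hf' : MonotoneOn f' (Icc a b)) :
    f' a * (b - a) ≤ f b - f a := by
  have hmono : MonotoneOn (fun x => f x - f' a * x) (Icc a b) :=
    monotoneOn_Icc_of_hasDerivAt_nonneg
      (fun x hx => by simpa using (hf x hx).fun_sub ((hasDerivAt_id x).const_mul (f' a)))
      (fun x hx => sub_nonneg.2 (hf' (left_mem_Icc.2 hab) (Ioo_subset_Icc_self hx) hx.1.le))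
  have hends := hmono (left_mem_Icc.2 hab) (right_mem_Icc.2 hab) hab
  simp only at hends
  linarith

end Calculus

section Concavity

variable {σ a b : ℝ} {M M' M'' : ℝ → ℝ}

theorem monotoneOn_deriv_of_sq_le_mul (hσ : 0 ≤ σ) (hM' : ∀ x ∈ Icc a b, HasDerivAt M' (M'' x) x)
    (hpos : ∀ x ∈ Ioo a b, 0 < M x) (hineq : ∀ x ∈ Ioo a b, σ * M' x ^ 2 ≤ M'' x * M x) :
    MonotoneOn M' (Icc a b) :=
  monotoneOn_Icc_of_hasDerivAt_nonneg hM' fun x hx =>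
    nonneg_of_mul_nonneg_left ((by positivity : 0 ≤ σ * M' x ^ 2).trans (hineq x hx)) (hpos x hx)

theorem pos_of_sq_le_mul (hσ : 0 ≤ σ) (hM : ∀ x ∈ Icc a b, HasDerivAt M (M' x) x)
    (hM' : ∀ x ∈ Icc a b, HasDerivAt M' (M'' x) x) (hM0 : 0 < M a) (hM'0 : 0 ≤ M' a)
    (hineq : ∀ x ∈ Icc a b, σ * M' x ^ 2 ≤ M'' x * M x) : ∀ x ∈ Icc a b, 0 < M x := by
  refine pos_of_forall_Ico_pos_imp_pos (fun x hx => (hM x hx).continuousAt.continuousWithinAt)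
    hM0 fun u hu hpos => ?_
  have hsub : Icc a u ⊆ Icc a b := Icc_subset_Icc_right hu.2
  have hmono : MonotoneOn M' (Icc a u) :=
    monotoneOn_deriv_of_sq_le_mul hσ (fun x hx => hM' x (hsub hx))
      (fun x hx => hpos x (Ioo_subset_Ico_self hx))
      (fun x hx => hineq x (hsub (Ioo_subset_Icc_self hx)))
  have hgrowth := mul_sub_le_sub_of_monotoneOn_deriv hu.1.le (fun x hx => hM x (hsub hx)) hmono
  nlinarith [hu.1]

theorem monotoneOn_mul_rpow_neg_of_sq_le_mul (hM : ∀ x ∈ Icc a b, HasDerivAt M (M' x) x)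
    (hM' : ∀ x ∈ Icc a b, HasDerivAt M' (M'' x) x) (hpos : ∀ x ∈ Icc a b, 0 < M x)
    (hineq : ∀ x ∈ Icc a b, σ * M' x ^ 2 ≤ M'' x * M x) :
    MonotoneOn (fun x => M' x * M x ^ (-σ)) (Icc a b) := by
  refine monotoneOn_Icc_of_hasDerivAt_nonneg
    (fun x hx => (hM' x hx).mul ((hM x hx).rpow_const (p := -σ) (Or.inl (hpos x hx).ne')))
    fun x hx => ?_
  have hx := Ioo_subset_Icc_self hx
  have hpow : M x ^ (-σ) = M x ^ (-σ - 1) * M x := by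
    rw [← Real.rpow_add_one (hpos x hx).ne']
    ring_nf
  calc (0 : ℝ) ≤ M x ^ (-σ - 1) * (M'' x * M x - σ * M' x ^ 2) :=
        mul_nonneg (Real.rpow_pos_of_pos (hpos x hx) _).le (sub_nonneg.2 (hineq x hx))
    _ = M'' x * M x ^ (-σ) + M' x * (M' x * -σ * M x ^ (-σ - 1)) := by rw [hpow]; ring

theorem lt_add_div_of_sq_le_mul (hσ : 1 < σ) (hab : a ≤ b)
    (hM : ∀ x ∈ Icc a b, HasDerivAt M (M' x) x) (hM' : ∀ x ∈ Icc a b, HasDerivAt M' (M'' x) x)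
    (hpos : ∀ x ∈ Icc a b, 0 < M x) (hM'0 : 0 < M' a)
    (hineq : ∀ x ∈ Icc a b, σ * M' x ^ 2 ≤ M'' x * M x) :
    b < a + M a / ((σ - 1) * M' a) := by
  have hσ' : 1 - σ ≠ 0 := by linarith
  have hF : ∀ x ∈ Icc a b,
      HasDerivAt (fun y => M y ^ (1 - σ) / (1 - σ)) (M' x * M x ^ (-σ)) x := fun x hx => by
    refine (((hM x hx).rpow_const (Or.inl (hpos x hx).ne')).div_const (1 - σ)).congr_deriv ?_
    rw [sub_sub_cancel_left]
    field_simp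
  have hslope := mul_sub_le_sub_of_monotoneOn_deriv hab hF
    (monotoneOn_mul_rpow_neg_of_sq_le_mul hM hM' hpos hineq)
  have hMa := hpos a (left_mem_Icc.2 hab)
  have hMb : 0 < M b ^ (1 - σ) := Real.rpow_pos_of_pos (hpos b (right_mem_Icc.2 hab)) _
  have hpow : M a ^ (1 - σ) = M a ^ (-σ) * M a := by
    rw [← Real.rpow_add_one hMa.ne']
    ring_nf
  have hkey : (σ - 1) * M' a * (b - a) * M a ^ (-σ) < M a * M a ^ (-σ) := by
    simp only [hpow] at hslope
    rw [div_sub_div_same, le_div_iff_of_neg (by linarith)] at hslope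
    nlinarith
  have hlin := lt_of_mul_lt_mul_right hkey (Real.rpow_pos_of_pos hMa _).le
  rw [← sub_lt_iff_lt_add', lt_div_iff₀ (by nlinarith)]
  linarith

end Concavity

theorem stmt_6_general (σ t₀ T : ℝ) (hσ : 1 < σ)
    (M M' M'' : ℝ → ℝ)
    (hM : ∀ t ∈ Set.Ico t₀ T, HasDerivAt M (M' t) t)
    (hM' : ∀ t ∈ Set.Ico t₀ T, HasDerivAt M' (M'' t) t)
    (hM0 : 0 < M t₀) (hM'0 : 0 < M' t₀)
    (hineq : ∀ t ∈ Set.Ico t₀ T, σ * (M' t) ^ 2 ≤ M'' t * M t) :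
    T ≤ t₀ + M t₀ / ((σ - 1) * M' t₀) := by
  refine le_of_forall_lt fun t htT => ?_
  rcases lt_or_ge t t₀ with ht | ht
  · have : 0 < M t₀ / ((σ - 1) * M' t₀) := div_pos hM0 (mul_pos (by linarith) hM'0)
    linarith
  have hsub : Icc t₀ t ⊆ Ico t₀ T := Icc_subset_Ico_right htT
  have hMt := fun x hx => hM x (hsub hx)
  have hM't := fun x hx => hM' x (hsub hx)
  have hineqt := fun x hx => hineq x (hsub hx)
  exact lt_add_div_of_sq_le_mul hσ ht hMt hM't
    (pos_of_sq_le_mul (by linarith) hMt hM't hM0 hM'0.le hineqt) hM'0 hineqt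

theorem stmt_6 (σ t₀ T : ℝ) (hσ : 1 < σ) (ht : t₀ < T)
    (M M' M'' : ℝ → ℝ)
    (hM : ∀ t ∈ Set.Ico t₀ T, HasDerivAt M (M' t) t)
    (hM' : ∀ t ∈ Set.Ico t₀ T, HasDerivAt M' (M'' t) t)
    (hM''cont : ContinuousOn M'' (Set.Ico t₀ T))
    (hM0 : 0 < M t₀) (hM'0 : 0 < M' t₀)
    (hineq : ∀ t ∈ Set.Ico t₀ T, σ * (M' t) ^ 2 ≤ M'' t * M t) :
    T ≤ t₀ + M t₀ / ((σ - 1) * M' t₀) :=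
  stmt_6_general σ t₀ T hσ M M' M'' hM hM' hM0 hM'0 hineq
end

section
/- Let r > 2 and C > 0, and let M : [t₀, T) → ℝ be twice continuously differentiable with M'(t₀) > 0 and M''(t) ≥ C·(M'(t))^{r/2} for all t ∈ [t₀, T). Then T ≤ t₀ + 2·M'(t₀)^{1−r/2}/(C·(r−2)). -/
/-! With `y = M'` and `p = r / 2 > 1`, the inequality `y' ≥ C y ^ p` keeps `y ≥ y t₀ > 0`, and then
`(y ^ (1 - p))' = (1 - p) y ^ (-p) y' ≤ -(p - 1) C`. So the positive quantity `y ^ (1 - p)` decreases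
from `y t₀ ^ (1 - p)` at rate at least `(p - 1) C`, which bounds the length of the interval. -/

open Set

section
variable {y y' : ℝ → ℝ} {a b C p : ℝ}

-- Wherever `y` comes back down to `y a > 0`, its derivative is at least `C * y a ^ p > 0`.
theorem le_of_mul_rpow_le_deriv (hC : 0 < C) (hy : ∀ t ∈ Ico a b, HasDerivAt y (y' t) t)
    (hya : 0 < y a) (hineq : ∀ t ∈ Ico a b, C * y t ^ p ≤ y' t) {t : ℝ} (ht : t ∈ Ico a b) :
    y a ≤ y t := by
  have hsub : Icc a t ⊆ Ico a b := Icc_subset_Ico_right ht.2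
  refine image_le_of_deriv_right_lt_deriv_boundary' (f' := 0) continuousOn_const
    (fun _ _ => hasDerivWithinAt_const _ _ _) le_rfl
    (fun s hs => (hy s (hsub hs)).continuousAt.continuousWithinAt)
    (fun s hs => (hy s (hsub (Ico_subset_Icc_self hs))).hasDerivWithinAt)
    (fun s hs hys => ?_) ⟨ht.1, le_rfl⟩
  calc (0 : ℝ) < C * y s ^ p := mul_pos hC (Real.rpow_pos_of_pos (hys ▸ hya) p)
    _ ≤ y' s := hineq s (hsub (Ico_subset_Icc_self hs))

theorem antitoneOn_rpow_add_mul_of_mul_rpow_le_deriv (hp : 1 < p)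
    (hy : ∀ t ∈ Ico a b, HasDerivAt y (y' t) t) (hpos : ∀ t ∈ Ico a b, 0 < y t)
    (hineq : ∀ t ∈ Ico a b, C * y t ^ p ≤ y' t) :
    AntitoneOn (fun t => y t ^ (1 - p) + C * (p - 1) * t) (Ico a b) := by
  have hderiv : ∀ t ∈ Ico a b, HasDerivAt (fun t => y t ^ (1 - p) + C * (p - 1) * t)
      (y' t * (1 - p) * y t ^ (-p) + C * (p - 1)) t := fun t ht => by
    have h := ((hy t ht).rpow_const (p := 1 - p) (Or.inl (hpos t ht).ne')).add
      ((hasDerivAt_id' t).const_mul (C * (p - 1)))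
    rwa [sub_sub_cancel_left, mul_one] at h
  refine antitoneOn_of_hasDerivWithinAt_nonpos (convex_Ico a b)
    (fun t ht => (hderiv t ht).continuousAt.continuousWithinAt)
    (fun t ht => (hderiv t (interior_subset ht)).hasDerivWithinAt) (fun t ht => ?_)
  replace ht := interior_subset ht
  have hyp : y t ^ p * y t ^ (-p) = 1 := by
    rw [Real.rpow_neg (hpos t ht).le, mul_inv_cancel₀ (Real.rpow_pos_of_pos (hpos t ht) p).ne']
  have hq : 0 < y t ^ (-p) := Real.rpow_pos_of_pos (hpos t ht) _
  have := mul_le_mul_of_nonneg_right (hineq t ht) (mul_pos (sub_pos.2 hp) hq).le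
  linear_combination this - C * (p - 1) * hyp

theorem lt_add_rpow_div_of_mul_rpow_le_deriv (hC : 0 < C) (hp : 1 < p)
    (hy : ∀ t ∈ Ico a b, HasDerivAt y (y' t) t) (hya : 0 < y a)
    (hineq : ∀ t ∈ Ico a b, C * y t ^ p ≤ y' t) {t : ℝ} (ht : t ∈ Ico a b) :
    t < a + y a ^ (1 - p) / (C * (p - 1)) := by
  have hpos : ∀ s ∈ Ico a b, 0 < y s := fun s hs =>
    hya.trans_le (le_of_mul_rpow_le_deriv hC hy hya hineq hs)
  have hanti := antitoneOn_rpow_add_mul_of_mul_rpow_le_deriv hp hy hpos hineq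
    (left_mem_Ico.2 (ht.1.trans_lt ht.2)) ht ht.1
  have hyt : 0 < y t ^ (1 - p) := Real.rpow_pos_of_pos (hpos t ht) _
  rw [← sub_lt_iff_lt_add', lt_div_iff₀ (mul_pos hC (sub_pos.2 hp))]
  simp only at hanti
  linarith

theorem le_add_rpow_div_of_mul_rpow_le_deriv (hC : 0 < C) (hp : 1 < p)
    (hy : ∀ t ∈ Ico a b, HasDerivAt y (y' t) t) (hya : 0 < y a)
    (hineq : ∀ t ∈ Ico a b, C * y t ^ p ≤ y' t) :
    b ≤ a + y a ^ (1 - p) / (C * (p - 1)) := by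
  by_contra! hb
  have ha : a ≤ a + y a ^ (1 - p) / (C * (p - 1)) :=
    le_add_of_nonneg_right (div_nonneg (Real.rpow_nonneg hya.le _) (mul_pos hC (sub_pos.2 hp)).le)
  exact lt_irrefl _ (lt_add_rpow_div_of_mul_rpow_le_deriv hC hp hy hya hineq ⟨ha, hb⟩)

end

theorem stmt_7_general (r C t₀ T : ℝ) (hr : 2 < r) (hC : 0 < C)
    (M' M'' : ℝ → ℝ)
    (hM' : ∀ t ∈ Set.Ico t₀ T, HasDerivAt M' (M'' t) t)
    (hM'0 : 0 < M' t₀)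
    (hineq : ∀ t ∈ Set.Ico t₀ T, C * (M' t) ^ (r / 2) ≤ M'' t) :
    T ≤ t₀ + 2 * (M' t₀) ^ (1 - r / 2) / (C * (r - 2)) := by
  have hbound : 2 * M' t₀ ^ (1 - r / 2) / (C * (r - 2))
      = M' t₀ ^ (1 - r / 2) / (C * (r / 2 - 1)) := by
    field_simp
  rw [hbound]
  exact le_add_rpow_div_of_mul_rpow_le_deriv hC (by linarith) hM' hM'0 hineq

theorem stmt_7 (r C t₀ T : ℝ) (hr : 2 < r) (hC : 0 < C) (ht : t₀ < T)
    (M M' M'' : ℝ → ℝ)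
    (hM : ∀ t ∈ Set.Ico t₀ T, HasDerivAt M (M' t) t)
    (hM' : ∀ t ∈ Set.Ico t₀ T, HasDerivAt M' (M'' t) t)
    (hM''cont : ContinuousOn M'' (Set.Ico t₀ T))
    (hM'0 : 0 < M' t₀)
    (hineq : ∀ t ∈ Set.Ico t₀ T, C * (M' t) ^ (r / 2) ≤ M'' t) :
    T ≤ t₀ + 2 * (M' t₀) ^ (1 - r / 2) / (C * (r - 2)) :=
  stmt_7_general r C t₀ T hr hC M' M'' hM' hM'0 hineq
end
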